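/- arXiv:math/0402205 — 2 statements merged into one kernel-verified Lean document; each statement's English description precedes it below -/
import Mathlib

section
/- Let G be a group with finite generating set 𝒢 whose Cayley graph (as a geodesic metric space with the word metric) has property L_δ for some δ ≥ 0. Then G is almost convex with constant 3δ + 2: for any two vertices g, g' at word-distance exactly n from the identity with d(g,g') ≤ 2, there is a path from g to g' of length at most 3δ + 2 lying entirely inside the closed ball of radius n about the identity. -/
/-- Property L_δ (for distinct triples). -/
def PropertyLdelta (X : Type*) [MetricSpace X] (δ : ℝ) : Prop :=
  ∀ x y z : X, x ≠ y → y ≠ z → z ≠ x → ∃ t : X,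
    dist x t + dist t y ≤ dist x y + δ ∧
    dist y t + dist t z ≤ dist y z + δ ∧
    dist z t + dist t x ≤ dist z x + δ

/-- A geodesic metric space: any two points are joined by a geodesic segment. -/
def IsGeodesicSpace (X : Type*) [MetricSpace X] : Prop :=
  ∀ a b : X, ∃ f : ℝ → X, f 0 = a ∧ f (dist a b) = b ∧
    ∀ s ∈ Set.Icc (0 : ℝ) (dist a b), ∀ u ∈ Set.Icc (0 : ℝ) (dist a b),
      dist (f s) (f u) = |s - u|

/-- The word metric on a group G with respect to a generating set S: the least
    length of a word over S representing g⁻¹h. -/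
noncomputable def wordDist {G : Type*} [Group G] (S : Finset G) (g h : G) : ℕ :=
  sInf {k : ℕ | ∃ l : List G, (∀ s ∈ l, s ∈ (S : Set G)) ∧ l.prod = g⁻¹ * h ∧ l.length = k}

/-- A 1-Lipschitz path of length `L` from `x` to `y` staying in the ball of radius `n`
    about `o`. -/
def GoodPath {X : Type*} [MetricSpace X] (o : X) (n L : ℝ) (x y : X) : Prop :=
  ∃ f : ℝ → X, f 0 = x ∧ f L = y ∧
    (∀ s ∈ Set.Icc (0 : ℝ) L, ∀ u ∈ Set.Icc (0 : ℝ) L, dist (f s) (f u) ≤ |s - u|) ∧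
    (∀ s ∈ Set.Icc (0 : ℝ) L, dist (f s) o ≤ n)

/-- A geodesic segment whose "perimeter" with respect to `o` is at most `2n`
    stays in the ball of radius `n` about `o`. -/
lemma goodPath_seg {X : Type*} [MetricSpace X] (hgeo : IsGeodesicSpace X)
    (o x y : X) (n : ℝ) (h : dist o x + dist o y + dist x y ≤ 2 * n) :
    GoodPath o n (dist x y) x y := by
  obtain ⟨f, hf0, hf1, hf⟩ := hgeo x y
  have hD : (0 : ℝ) ≤ dist x y := dist_nonneg
  refine ⟨f, hf0, hf1, fun s hs u hu => le_of_eq (hf s hs u hu), fun s hs => ?_⟩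
  have h0mem : (0 : ℝ) ∈ Set.Icc (0 : ℝ) (dist x y) := ⟨le_refl _, hD⟩
  have hDmem : dist x y ∈ Set.Icc (0 : ℝ) (dist x y) := ⟨hD, le_refl _⟩
  have e1 : dist (f s) x = s := by
    have h' := hf s hs 0 h0mem
    rw [hf0] at h'
    rw [h', abs_of_nonneg (by linarith [hs.1] : (0:ℝ) ≤ s - 0)]
    ring
  have e2 : dist (f s) y = dist x y - s := by
    have h' := hf s hs (dist x y) hDmem
    rw [hf1] at h'
    rw [h', abs_of_nonpos (by linarith [hs.2])]
    ring
  have t1 : dist (f s) o ≤ s + dist o x := by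
    calc dist (f s) o ≤ dist (f s) x + dist x o := dist_triangle _ _ _
    _ = s + dist o x := by rw [e1, dist_comm x o]
  have t2 : dist (f s) o ≤ (dist x y - s) + dist o y := by
    calc dist (f s) o ≤ dist (f s) y + dist y o := dist_triangle _ _ _
    _ = (dist x y - s) + dist o y := by rw [e2, dist_comm y o]
  linarith

/-- Concatenation of two good paths. -/
lemma goodPath_concat {X : Type*} [MetricSpace X] {o : X} {n L₁ L₂ : ℝ} {x y z : X}
    (h1 : 0 ≤ L₁) (h2 : 0 ≤ L₂)
    (p : GoodPath o n L₁ x y) (q : GoodPath o n L₂ y z) :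
    GoodPath o n (L₁ + L₂) x z := by
  obtain ⟨f, hf0, hfL, hflip, hfball⟩ := p
  obtain ⟨g, hg0, hgL, hglip, hgball⟩ := q
  refine ⟨fun s => if s ≤ L₁ then f s else g (s - L₁), ?_, ?_, ?_, ?_⟩
  · simp only [if_pos h1, hf0]
  · by_cases hc : L₁ + L₂ ≤ L₁
    · have hL2 : L₂ = 0 := le_antisymm (by linarith) h2
      simp only [if_pos hc]
      rw [hL2, add_zero, hfL, ← hg0, ← hL2, hgL]
    · simp only [if_neg hc, add_sub_cancel_left, hgL]
  · intro s hs u hu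
    simp only
    split_ifs with hs1 hu1 hu1
    · exact hflip s ⟨hs.1, hs1⟩ u ⟨hu.1, hu1⟩
    · have hu' : u - L₁ ∈ Set.Icc (0 : ℝ) L₂ :=
        ⟨by linarith [not_le.mp hu1], by linarith [hu.2]⟩
      have c1 : dist (f s) (f L₁) ≤ |s - L₁| := hflip s ⟨hs.1, hs1⟩ L₁ ⟨h1, le_refl _⟩
      have c2 : dist (g 0) (g (u - L₁)) ≤ |0 - (u - L₁)| :=
        hglip 0 ⟨le_refl _, h2⟩ (u - L₁) hu'
      have e1 : |s - L₁| = L₁ - s := by rw [abs_of_nonpos (by linarith)]; ring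
      have e2 : |(0 : ℝ) - (u - L₁)| = u - L₁ := by
        rw [abs_of_nonpos (by linarith [not_le.mp hu1])]; ring
      have e3 : |s - u| = u - s := by
        rw [abs_of_nonpos (by linarith [not_le.mp hu1])]; ring
      calc dist (f s) (g (u - L₁)) ≤ dist (f s) (f L₁) + dist (f L₁) (g (u - L₁)) :=
            dist_triangle _ _ _
      _ = dist (f s) (f L₁) + dist (g 0) (g (u - L₁)) := by rw [hfL, ← hg0]
      _ ≤ |s - L₁| + |0 - (u - L₁)| := add_le_add c1 c2
      _ = u - s := by rw [e1, e2]; ring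
      _ = |s - u| := e3.symm
    · have hs' : s - L₁ ∈ Set.Icc (0 : ℝ) L₂ :=
        ⟨by linarith [not_le.mp hs1], by linarith [hs.2]⟩
      have c1 : dist (f u) (f L₁) ≤ |u - L₁| := hflip u ⟨hu.1, hu1⟩ L₁ ⟨h1, le_refl _⟩
      have c2 : dist (g 0) (g (s - L₁)) ≤ |0 - (s - L₁)| :=
        hglip 0 ⟨le_refl _, h2⟩ (s - L₁) hs'
      have e1 : |u - L₁| = L₁ - u := by rw [abs_of_nonpos (by linarith)]; ring
      have e2 : |(0 : ℝ) - (s - L₁)| = s - L₁ := by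
        rw [abs_of_nonpos (by linarith [not_le.mp hs1])]; ring
      have e3 : |s - u| = s - u := by
        rw [abs_of_nonneg (by linarith [not_le.mp hs1])]
      calc dist (g (s - L₁)) (f u) ≤ dist (g (s - L₁)) (g 0) + dist (g 0) (f u) :=
            dist_triangle _ _ _
      _ = dist (g 0) (g (s - L₁)) + dist (f u) (f L₁) := by
            rw [dist_comm (g (s - L₁)) (g 0), hg0, ← hfL, dist_comm (f L₁) (f u)]
      _ ≤ |0 - (s - L₁)| + |u - L₁| := add_le_add c2 c1
      _ = s - u := by rw [e1, e2]; ring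
      _ = |s - u| := e3.symm
    · have hs' : s - L₁ ∈ Set.Icc (0 : ℝ) L₂ :=
        ⟨by linarith [not_le.mp hs1], by linarith [hs.2]⟩
      have hu' : u - L₁ ∈ Set.Icc (0 : ℝ) L₂ :=
        ⟨by linarith [not_le.mp hu1], by linarith [hu.2]⟩
      have := hglip (s - L₁) hs' (u - L₁) hu'
      have e : |s - L₁ - (u - L₁)| = |s - u| := by congr 1; ring
      rw [e] at this
      exact this
  · intro s hs
    simp only
    split_ifs with hs1
    · exact hfball s ⟨hs.1, hs1⟩
    · exact hgball (s - L₁) ⟨by linarith [not_le.mp hs1], by linarith [hs.2]⟩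

/-- If the Cayley graph of (G, S) — a geodesic metric space X in which the group
    elements embed isometrically for the word metric — has property L_δ, then G is
    almost convex with constant 3δ+2: any two vertices at distance exactly n from
    the identity and at most 2 apart are joined by a (1-Lipschitz-parametrized)
    path of length at most 3δ+2 lying in the closed ball of radius n about the
    identity vertex. -/
theorem Ldelta_implies_almostConvex
    {G : Type*} [Group G] (S : Finset G)
    (hsymm : ∀ s ∈ S, s⁻¹ ∈ S) (hgen : Subgroup.closure (S : Set G) = ⊤)
    {X : Type*} [MetricSpace X] (ι : G → X)
    (hdist : ∀ g h : G, dist (ι g) (ι h) = (wordDist S g h : ℝ))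
    (hgeo : IsGeodesicSpace X)
    (δ : ℝ) (hδ : 0 ≤ δ) (hL : PropertyLdelta X δ) :
    ∀ (n : ℝ) (g g' : G), dist (ι 1) (ι g) = n → dist (ι 1) (ι g') = n →
      dist (ι g) (ι g') ≤ 2 →
      ∃ (L : ℝ) (f : ℝ → X), 0 ≤ L ∧ L ≤ 3 * δ + 2 ∧
        f 0 = ι g ∧ f L = ι g' ∧
        (∀ s ∈ Set.Icc 0 L, ∀ u ∈ Set.Icc 0 L, dist (f s) (f u) ≤ |s - u|) ∧
        (∀ s ∈ Set.Icc 0 L, dist (f s) (ι 1) ≤ n) := by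
  intro n g g' h1 h2 hgg'
  set o := ι 1 with ho
  set a := ι g with ha
  set b := ι g' with hb
  have hn : 0 ≤ n := h1 ▸ dist_nonneg
  have hoa : dist o a = n := h1
  have hob : dist o b = n := h2
  by_cases hcase : 2 * n ≤ 3 * δ + 2
  · -- short case: route through the identity
    have p1 : GoodPath o n (dist a o) a o :=
      goodPath_seg hgeo o a o n (by rw [dist_comm a o, hoa, dist_self]; linarith)
    have p2 : GoodPath o n (dist o b) o b :=
      goodPath_seg hgeo o o b n (by rw [dist_self, hob]; linarith)
    obtain ⟨f, hf0, hfL, hflip, hfball⟩ :=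
      goodPath_concat dist_nonneg dist_nonneg p1 p2
    refine ⟨dist a o + dist o b, f, by positivity, ?_, hf0, hfL, hflip, hfball⟩
    rw [dist_comm a o, hoa, hob]; linarith
  · -- long case
    have hlt : 3 * δ + 2 < 2 * n := not_le.mp hcase
    have hδ2 : δ / 2 < n := by linarith
    -- point x₁ on a geodesic from o to a, at distance δ/2 before a
    obtain ⟨γ, hγ0, hγn, hγ⟩ := hgeo o a
    rw [hoa] at hγn hγ
    set x₁ := γ (n - δ / 2) with hx₁
    have hmem1 : n - δ / 2 ∈ Set.Icc (0 : ℝ) n := ⟨by linarith, by linarith⟩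
    have hx₁o : dist x₁ o = n - δ / 2 := by
      rw [hx₁, ← hγ0, hγ (n - δ / 2) hmem1 0 ⟨le_refl _, hn⟩,
        abs_of_nonneg (by linarith)]
      ring
    have hx₁a : dist x₁ a = δ / 2 := by
      rw [hx₁, ← hγn, hγ (n - δ / 2) hmem1 n ⟨hn, le_refl _⟩,
        abs_of_nonpos (by linarith)]
      ring
    -- point x₃ on a geodesic from o to b, at distance δ/2 before b
    obtain ⟨γ', hγ'0, hγ'n, hγ'⟩ := hgeo o b
    rw [hob] at hγ'n hγ'
    set x₃ := γ' (n - δ / 2) with hx₃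
    have hx₃o : dist x₃ o = n - δ / 2 := by
      rw [hx₃, ← hγ'0, hγ' (n - δ / 2) hmem1 0 ⟨le_refl _, hn⟩,
        abs_of_nonneg (by linarith)]
      ring
    have hx₃b : dist x₃ b = δ / 2 := by
      rw [hx₃, ← hγ'n, hγ' (n - δ / 2) hmem1 n ⟨hn, le_refl _⟩,
        abs_of_nonpos (by linarith)]
      ring
    have p1 : GoodPath o n (dist a x₁) a x₁ :=
      goodPath_seg hgeo o a x₁ n (by
        rw [hoa, dist_comm o x₁, hx₁o, dist_comm a x₁, hx₁a]; linarith)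
    have p4 : GoodPath o n (dist x₃ b) x₃ b :=
      goodPath_seg hgeo o x₃ b n (by
        rw [dist_comm o x₃, hx₃o, hob, hx₃b]; linarith)
    by_cases hxx : x₁ = x₃
    · -- the two retreat points coincide
      rw [← hxx] at p4
      have hx₁b : dist x₁ b = δ / 2 := by rw [hxx, hx₃b]
      obtain ⟨f, hf0, hfL, hflip, hfball⟩ :=
        goodPath_concat dist_nonneg dist_nonneg p1 p4
      refine ⟨dist a x₁ + dist x₁ b, f, by positivity, ?_, hf0, hfL, hflip, hfball⟩
      rw [dist_comm a x₁, hx₁a, hx₁b]; linarith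
    · -- apply property L_δ to (o, x₁, x₃)
      have ho1 : o ≠ x₁ := by
        intro h
        have : (0 : ℝ) < dist x₁ o := by rw [hx₁o]; linarith
        rw [← h, dist_self] at this; linarith
      have ho3 : x₃ ≠ o := by
        intro h
        have : (0 : ℝ) < dist x₃ o := by rw [hx₃o]; linarith
        rw [h, dist_self] at this; linarith
      obtain ⟨u, hA, hB, hC⟩ := hL o x₁ x₃ ho1 hxx ho3
      rw [dist_comm o x₁, hx₁o] at hA
      rw [hx₃o] at hC
      have p2 : GoodPath o n (dist x₁ u) x₁ u :=
        goodPath_seg hgeo o x₁ u n (by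
          have h' : dist x₁ u = dist u x₁ := dist_comm _ _
          rw [dist_comm o x₁, hx₁o]
          linarith)
      have p3 : GoodPath o n (dist u x₃) u x₃ :=
        goodPath_seg hgeo o u x₃ n (by
          have h' : dist u x₃ = dist x₃ u := dist_comm _ _
          have h'' : dist u o = dist o u := dist_comm _ _
          rw [dist_comm o x₃, hx₃o]
          linarith)
      have p12 : GoodPath o n (dist a x₁ + dist x₁ u) a u :=
        goodPath_concat dist_nonneg dist_nonneg p1 p2
      have p34 : GoodPath o n (dist u x₃ + dist x₃ b) u b :=
        goodPath_concat dist_nonneg dist_nonneg p3 p4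
      obtain ⟨f, hf0, hfL, hflip, hfball⟩ :=
        goodPath_concat (by positivity) (by positivity) p12 p34
      refine ⟨dist a x₁ + dist x₁ u + (dist u x₃ + dist x₃ b), f, by positivity, ?_,
        hf0, hfL, hflip, hfball⟩
      have htri : dist x₁ x₃ ≤ dist x₁ a + dist a b + dist b x₃ := dist_triangle4 _ _ _ _
      have e1 : dist a x₁ = δ / 2 := by rw [dist_comm a x₁, hx₁a]
      have e4 : dist b x₃ = δ / 2 := by rw [dist_comm b x₃, hx₃b]
      rw [e1, hx₃b]
      rw [hx₁a, e4] at htri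
      linarith
end

section
/- Consider ℤ² with the word metric coming from the generating set {a, b, c, a⁻¹, b⁻¹, c⁻¹} where a = (1,0), b = (0,1), c = (1,1). For any δ ≥ 0, there exist three points x, y, z in this Cayley graph such that no point t makes all three of (x,t,y), (y,t,z), (z,t,x) into δ-paths; that is, this Cayley graph does not have property L_δ. -/
/-- The generating set {a, b, c, a⁻¹, b⁻¹, c⁻¹} of ℤ², where a = (1,0),
    b = (0,1), c = (1,1). -/
def genSet : Set (ℤ × ℤ) := {(1,0), (0,1), (1,1), (-1,0), (0,-1), (-1,-1)}

/-- The word metric on ℤ² with respect to `genSet`. -/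
noncomputable def wdist (x y : ℤ × ℤ) : ℕ :=
  sInf {k : ℕ | ∃ l : List (ℤ × ℤ), (∀ s ∈ l, s ∈ genSet) ∧ l.sum = y - x ∧ l.length = k}

/-- The closed form of the word norm: `max (|p|, |q|, |p - q|)`. -/
def F (v : ℤ × ℤ) : ℕ := max (max v.1.natAbs v.2.natAbs) (v.1 - v.2).natAbs

lemma rep_sum (n : ℕ) (g : ℤ × ℤ) :
    (List.replicate n g).sum = ((n : ℤ) * g.1, (n : ℤ) * g.2) := by
  simp [List.sum_replicate, Prod.ext_iff, nsmul_eq_mul]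

lemma two_rep (m n : ℕ) (g₁ g₂ : ℤ × ℤ) (h₁ : g₁ ∈ genSet) (h₂ : g₂ ∈ genSet) :
    ∃ l : List (ℤ × ℤ), (∀ s ∈ l, s ∈ genSet) ∧
      l.sum = ((m : ℤ) * g₁.1 + (n : ℤ) * g₂.1, (m : ℤ) * g₁.2 + (n : ℤ) * g₂.2) ∧
      l.length = m + n := by
  refine ⟨List.replicate m g₁ ++ List.replicate n g₂, ?_, ?_, by simp⟩
  · intro s hs
    rcases List.mem_append.1 hs with h | h <;>
      simp_all [List.eq_of_mem_replicate h]
  · simp [rep_sum, Prod.ext_iff]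

lemma exists_list (v : ℤ × ℤ) :
    ∃ l : List (ℤ × ℤ), (∀ s ∈ l, s ∈ genSet) ∧ l.sum = v ∧ l.length = F v := by
  obtain ⟨p, q⟩ := v
  have h10 : ((1, 0) : ℤ × ℤ) ∈ genSet := by simp [genSet]
  have h01 : ((0, 1) : ℤ × ℤ) ∈ genSet := by simp [genSet]
  have h11 : ((1, 1) : ℤ × ℤ) ∈ genSet := by simp [genSet]
  have hm10 : ((-1, 0) : ℤ × ℤ) ∈ genSet := by simp [genSet]
  have hm01 : ((0, -1) : ℤ × ℤ) ∈ genSet := by simp [genSet]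
  have hm11 : ((-1, -1) : ℤ × ℤ) ∈ genSet := by simp [genSet]
  rcases le_total 0 p with hp | hp <;> rcases le_total 0 q with hq | hq
  · rcases le_total q p with hpq | hpq
    · obtain ⟨l, hl, hs, hlen⟩ := two_rep q.toNat (p - q).toNat _ _ h11 h10
      exact ⟨l, hl, by rw [hs]; simp [Prod.ext_iff]; omega,
        by rw [hlen]; simp [F]; omega⟩
    · obtain ⟨l, hl, hs, hlen⟩ := two_rep p.toNat (q - p).toNat _ _ h11 h01
      exact ⟨l, hl, by rw [hs]; simp [Prod.ext_iff]; omega,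
        by rw [hlen]; simp [F]; omega⟩
  · obtain ⟨l, hl, hs, hlen⟩ := two_rep p.toNat (-q).toNat _ _ h10 hm01
    exact ⟨l, hl, by rw [hs]; simp [Prod.ext_iff]; omega,
      by rw [hlen]; simp [F]; omega⟩
  · obtain ⟨l, hl, hs, hlen⟩ := two_rep (-p).toNat q.toNat _ _ hm10 h01
    exact ⟨l, hl, by rw [hs]; simp [Prod.ext_iff]; omega,
      by rw [hlen]; simp [F]; omega⟩
  · rcases le_total q p with hpq | hpq
    · obtain ⟨l, hl, hs, hlen⟩ := two_rep (-p).toNat (p - q).toNat _ _ hm11 hm01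
      exact ⟨l, hl, by rw [hs]; simp [Prod.ext_iff]; omega,
        by rw [hlen]; simp [F]; omega⟩
    · obtain ⟨l, hl, hs, hlen⟩ := two_rep (-q).toNat (q - p).toNat _ _ hm11 hm10
      exact ⟨l, hl, by rw [hs]; simp [Prod.ext_iff]; omega,
        by rw [hlen]; simp [F]; omega⟩

lemma F_le_len (l : List (ℤ × ℤ)) (h : ∀ s ∈ l, s ∈ genSet) : F l.sum ≤ l.length := by
  induction l with
  | nil => simp [F]
  | cons s l ih =>
    have hs : s ∈ genSet := h s List.mem_cons_self
    have ih' := ih fun t ht => h t (List.mem_cons_of_mem _ ht)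
    have hsum : (s :: l).sum = s + l.sum := List.sum_cons
    simp only [genSet, Set.mem_insert_iff, Set.mem_singleton_iff] at hs
    rcases hs with rfl | rfl | rfl | rfl | rfl | rfl <;>
      · rw [hsum]
        simp only [F, Prod.fst_add, Prod.snd_add, List.length_cons] at *
        omega

lemma wdist_eq (x y : ℤ × ℤ) : wdist x y = F (y - x) := by
  obtain ⟨l, hl, hs, hlen⟩ := exists_list (y - x)
  apply le_antisymm
  · exact Nat.sInf_le ⟨l, hl, hs, hlen⟩
  · refine le_csInf ⟨l.length, l, hl, hs, rfl⟩ ?_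
    rintro k ⟨m, hm, hms, hmk⟩
    rw [← hms, ← hmk]
    exact F_le_len m hm

/-- ℤ² with the word metric from generators (1,0), (0,1), (1,1) and their inverses
    does not have property L_δ for any δ ≥ 0: there are three (distinct) points
    x, y, z such that no point t makes (x,t,y), (y,t,z), (z,t,x) all δ-paths. -/
theorem Z2_abc_not_Ldelta (δ : ℝ) (hδ : 0 ≤ δ) :
    ∃ x y z : ℤ × ℤ, x ≠ y ∧ y ≠ z ∧ z ≠ x ∧
      ∀ t : ℤ × ℤ, ¬ ((wdist x t + wdist t y : ℝ) ≤ (wdist x y : ℝ) + δ ∧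
                      (wdist y t + wdist t z : ℝ) ≤ (wdist y z : ℝ) + δ ∧
                      (wdist z t + wdist t x : ℝ) ≤ (wdist z x : ℝ) + δ) := by
  set N : ℕ := 2 * ⌈δ⌉₊ + 1 with hN
  have hceil : δ ≤ (⌈δ⌉₊ : ℝ) := Nat.le_ceil δ
  refine ⟨(0, 0), (2 * N, 2 * N), (2 * N, 0), ?_, ?_, ?_, ?_⟩
  · simp [Prod.ext_iff] <;> omega
  · simp [Prod.ext_iff] <;> omega
  · simp [Prod.ext_iff] <;> omega
  intro t ⟨h1, h2, h3⟩
  obtain ⟨u, v⟩ := t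
  rw [wdist_eq, wdist_eq, wdist_eq] at h1 h2 h3
  -- integer lower bounds on the six distances
  have b1 : (u + (2 * (N : ℤ) - v) : ℤ) ≤
      (F ((u, v) - (0, 0)) : ℤ) + (F ((2 * (N : ℤ), 2 * (N : ℤ)) - (u, v)) : ℤ) := by
    simp only [F, Prod.mk_sub_mk]; omega
  have b2 : ((2 * (N : ℤ) - v) + (2 * (N : ℤ) - u + v) : ℤ) ≤
      (F ((u, v) - (2 * (N : ℤ), 2 * (N : ℤ))) : ℤ) + (F ((2 * (N : ℤ), 0) - (u, v)) : ℤ) := by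
    simp only [F, Prod.mk_sub_mk]; omega
  have b3 : ((2 * (N : ℤ) + v - u) + u : ℤ) ≤
      (F ((u, v) - (2 * (N : ℤ), 0)) : ℤ) + (F ((0, 0) - (u, v)) : ℤ) := by
    simp only [F, Prod.mk_sub_mk]; omega
  -- the fixed distances between x, y, z
  have d1 : F (((2 * (N : ℤ), 2 * (N : ℤ)) : ℤ × ℤ) - (0, 0)) = 2 * N := by
    simp [F]; omega
  have d2 : F (((2 * (N : ℤ), 0) : ℤ × ℤ) - (2 * (N : ℤ), 2 * (N : ℤ))) = 2 * N := by
    simp [F]; omega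
  have d3 : F (((0, 0) : ℤ × ℤ) - (2 * (N : ℤ), 0)) = 2 * N := by
    simp [F]; omega
  rw [d1] at h1
  rw [d2] at h2
  rw [d3] at h3
  generalize F ((u, v) - (0, 0)) = A1 at h1 b1
  generalize F ((2 * (N : ℤ), 2 * (N : ℤ)) - (u, v)) = A2 at h1 b1
  generalize F ((u, v) - (2 * (N : ℤ), 2 * (N : ℤ))) = A3 at h2 b2
  generalize F ((2 * (N : ℤ), 0) - (u, v)) = A4 at h2 b2
  generalize F ((u, v) - (2 * (N : ℤ), 0)) = A5 at h3 b3
  generalize F ((0, 0) - (u, v)) = A6 at h3 b3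
  have key : (8 * (N : ℤ)) ≤ ((A1 : ℤ) + A2) + ((A3 : ℤ) + A4) + ((A5 : ℤ) + A6) := by
    linarith [b1, b2, b3]
  have keyR : (8 * (N : ℝ)) ≤ ((A1 : ℝ) + A2) + ((A3 : ℝ) + A4) + ((A5 : ℝ) + A6) := by
    exact_mod_cast key
  have hNe : (N : ℝ) = 2 * (⌈δ⌉₊ : ℝ) + 1 := by rw [hN]; push_cast; ring
  have hc0 : (0 : ℝ) ≤ (⌈δ⌉₊ : ℝ) := by positivity
  push_cast at h1 h2 h3
  linarith [Nat.le_ceil δ]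
end
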